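/- arXiv:2302.07063 — 3 statements merged into one kernel-verified Lean document; each statement's English description precedes it below -/
import Mathlib

section
/- Let n,d,k be positive integers with d ≤ n. Then H_ESR^R(n,d,k) = H_AD^R(n,d,k) = H_EAD^R(n,d,k) = H_AD(n,d,k) = H_AR(n,d,k) = H_ESR(n,d,k) = H_EAD(n,d,k) = H_EAR(n,d,k) = n. -/
open scoped Classical
noncomputable section

/-- Attributes are natural numbers. -/
abbrev Attr := ℕ
/-- A value in an equation system: `some δ` is a number, `none` is the special symbol `*`. -/
abbrev Val := Option ℕ
/-- A decision rule: left-hand side (set of equations attribute = numeric value) and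
right-hand side (decision). -/
abbrev Rule := Finset (Attr × ℕ) × ℕ
/-- An equation system over attributes with possibly `*` values. -/
abbrev EqSys := Finset (Attr × Val)
/-- A decision rule system. -/
abbrev DRS := Finset Rule

/-- The equation system `K(r)` of a rule. -/
def Kr (r : Rule) : EqSys := r.1.image fun p => (p.1, some p.2)
/-- The set `A(r)` of attributes of a rule. -/
def Ar (r : Rule) : Finset Attr := r.1.image Prod.fst
/-- The length of a rule. -/
def ruleLen (r : Rule) : ℕ := r.1.card
/-- Well-formed rule: attributes in the left-hand side are pairwise different. -/
def WFRule (r : Rule) : Prop := ∀ p ∈ r.1, ∀ q ∈ r.1, p.1 = q.1 → p.2 = q.2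
/-- Well-formed decision rule system: a finite nonempty set of well-formed rules. -/
def WFS (S : DRS) : Prop := S.Nonempty ∧ ∀ r ∈ S, WFRule r

/-- `A(S)`: attributes of a system. -/
def AS (S : DRS) : Finset Attr := S.biUnion Ar
/-- `n(S) = |A(S)|`. -/
def nS (S : DRS) : ℕ := (AS S).card
/-- `d(S)`: the maximum length of a rule in `S`. -/
def dS (S : DRS) : ℕ := S.sup ruleLen
/-- `V_S(a)`: values of attribute `a` occurring in `S`. -/
def VS (S : DRS) (a : Attr) : Finset ℕ :=
  S.biUnion fun r => (r.1.filter fun p => p.1 = a).image Prod.snd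
/-- `k(S)`: maximum number of values of a single attribute. -/
def kS (S : DRS) : ℕ := (AS S).sup fun a => (VS S a).card

/-- Branching sets of o-decision trees: `V_S(a)`. -/
def Bo (S : DRS) (a : Attr) : Finset Val := (VS S a).image some
/-- Branching sets of e-decision trees: `EV_S(a) = V_S(a) ∪ {*}`. -/
def Be (S : DRS) (a : Attr) : Finset Val := insert none (Bo S a)

/-- Consistency of an equation system. -/
def Consistent (K : EqSys) : Prop := ∀ p ∈ K, ∀ q ∈ K, p.1 = q.1 → p.2 = q.2

/-- Decision trees: terminal nodes labeled with sets of rules, working nodes labeled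
with an attribute and having a child for each possible value (only children whose
labels lie in the relevant branching set are meaningful). -/
inductive DTree where
  | leaf : DRS → DTree
  | node : Attr → (Val → DTree) → DTree

/-- Depth of a decision tree with respect to branching sets `B`. -/
def depthT (B : Attr → Finset Val) : DTree → ℕ
  | .leaf _ => 0
  | .node a c => ((B a).sup fun v => depthT B (c v)) + 1

/-- A decision tree over a system `S` (with branching sets `B`). -/
def TreeOver (B : Attr → Finset Val) (S : DRS) : DTree → Prop
  | .leaf Z => Z ⊆ S
  | .node a c => a ∈ AS S ∧ ∀ v ∈ B a, TreeOver B S (c v)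

/-- `PathT B Γ K Z`: there is a complete path in `Γ` (following edges with labels
in the branching sets `B`) with equation system `K` and terminal label `Z`. -/
inductive PathT (B : Attr → Finset Val) : DTree → EqSys → DRS → Prop
  | leaf (Z : DRS) : PathT B (.leaf Z) ∅ Z
  | node (a : Attr) (c : Val → DTree) (v : Val) (K : EqSys) (Z : DRS) :
      v ∈ B a → PathT B (c v) K Z → PathT B (.node a c) (insert (a, v) K) Z

/-- `Γ` solves the problem given by correctness condition `cond` on (K(ξ), τ(ξ)). -/
def Solves (cond : EqSys → DRS → Prop) (B : Attr → Finset Val) (Γ : DTree) : Prop :=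
  ∀ K Z, PathT B Γ K Z → Consistent K → cond K Z

/-- Correctness condition for the All Rules problem. -/
def CondAR (S : DRS) (K : EqSys) (Z : DRS) : Prop :=
  (∀ r ∈ Z, Kr r ⊆ K) ∧ ∀ r ∈ S, r ∉ Z → ¬ Consistent (Kr r ∪ K)
/-- Correctness condition for the All Decisions problem. -/
def CondAD (S : DRS) (K : EqSys) (Z : DRS) : Prop :=
  (∀ r ∈ Z, Kr r ⊆ K) ∧ ∀ r ∈ S, r.2 ∉ Z.image Prod.snd → ¬ Consistent (Kr r ∪ K)
/-- Correctness condition for the Some Rules problem. -/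
def CondSR (S : DRS) (K : EqSys) (Z : DRS) : Prop :=
  (∀ r ∈ Z, Kr r ⊆ K) ∧ (Z = ∅ → ∀ r ∈ S, ¬ Consistent (Kr r ∪ K))

/-- Minimum depth of a decision tree over `S` solving the given problem. -/
def hgen (cond : DRS → EqSys → DRS → Prop) (B : DRS → Attr → Finset Val) (S : DRS) : ℕ :=
  sInf {m | ∃ Γ, TreeOver (B S) S Γ ∧ Solves (cond S) (B S) Γ ∧ depthT (B S) Γ = m}

def hAR (S : DRS) : ℕ := hgen CondAR Bo S
def hEAR (S : DRS) : ℕ := hgen CondAR Be S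
def hAD (S : DRS) : ℕ := hgen CondAD Bo S
def hEAD (S : DRS) : ℕ := hgen CondAD Be S
def hSR (S : DRS) : ℕ := hgen CondSR Bo S
def hESR (S : DRS) : ℕ := hgen CondSR Be S

/-- SR-reduced system. -/
def SRred (S : DRS) : Prop := ∀ r ∈ S, ¬ ∃ r' ∈ S, r'.1 ⊂ r.1
/-- AD-reduced system. -/
def ADred (S : DRS) : Prop := ∀ r ∈ S, ¬ ∃ r' ∈ S, r'.1 ⊂ r.1 ∧ r'.2 = r.2
/-- `R_SR(S)`. -/
def RSR (S : DRS) : DRS := S.filter fun r => ¬ ∃ r' ∈ S, r'.1 ⊂ r.1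
/-- `R_AD(S)`. -/
def RAD (S : DRS) : DRS := S.filter fun r => ¬ ∃ r' ∈ S, r'.1 ⊂ r.1 ∧ r'.2 = r.2

/-- `h_C(n,d,k)`: minimum of `h S` over systems with the given parameters. -/
def hmin (h : DRS → ℕ) (n d k : ℕ) : ℕ :=
  sInf {m | ∃ S, WFS S ∧ nS S = n ∧ dS S = d ∧ kS S = k ∧ h S = m}
/-- `H_C(n,d,k)`: maximum of `h S` over systems with the given parameters. -/
def Hmax (h : DRS → ℕ) (n d k : ℕ) : ℕ :=
  sSup {m | ∃ S, WFS S ∧ nS S = n ∧ dS S = d ∧ kS S = k ∧ h S = m}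
/-- `h_C^R(n,d,k)`: minimum of `h S` over reduced systems (`P`) with given parameters. -/
def hminR (h : DRS → ℕ) (P : DRS → Prop) (n d k : ℕ) : ℕ :=
  sInf {m | ∃ S, WFS S ∧ P S ∧ nS S = n ∧ dS S = d ∧ kS S = k ∧ h S = m}
/-- `H_C^R(n,d,k)`: maximum of `h S` over reduced systems (`P`) with given parameters. -/
def HmaxR (h : DRS → ℕ) (P : DRS → Prop) (n d k : ℕ) : ℕ :=
  sSup {m | ∃ S, WFS S ∧ P S ∧ nS S = n ∧ dS S = d ∧ kS S = k ∧ h S = m}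

/-- Node cover of the hypergraph `G(S)`. -/
def NodeCover (S : DRS) (B : Finset Attr) : Prop :=
  B ⊆ AS S ∧ ∀ r ∈ S, Ar r ≠ ∅ → (Ar r ∩ B).Nonempty
/-- `β(S)`: minimum cardinality of a node cover of `G(S)`. -/
def nodeCoverNum (S : DRS) : ℕ := sInf {m | ∃ B, NodeCover S B ∧ B.card = m}

/-- `I_SR(S)`. -/
def ISR (S : DRS) : DRS := if ∀ r ∈ S, r.1 ≠ ∅ then S else S.filter fun r => r.1 = ∅
/-- `D_0(S)`: right-hand sides of length-0 rules. -/
def D0 (S : DRS) : Finset ℕ := (S.filter fun r => r.1 = ∅).image Prod.snd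
/-- `I_AD(S)`. -/
def IAD (S : DRS) : DRS := S.filter fun r => r.1 = ∅ ∨ r.2 ∉ D0 S

/-- `K(S, δ̄)` for an assignment `f` of numeric values to all attributes of `S`. -/
def KStuple (S : DRS) (f : Attr → ℕ) : EqSys := (AS S).image fun a => (a, some (f a))
/-- An incomplete decision rule system. -/
def IncompleteS (S : DRS) : Prop :=
  ∃ f : Attr → ℕ, (∀ a ∈ AS S, f a ∈ VS S a) ∧ ∀ r ∈ S, ¬ Consistent (Kr r ∪ KStuple S f)

/-- `r_α`: remove from the left-hand side of `r` all equations belonging to `α`. -/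
def resRule (α : EqSys) (r : Rule) : Rule :=
  (r.1.filter fun p => (p.1, (some p.2 : Val)) ∉ α, r.2)
/-- `S_α`: rules `r_α` for the rules `r ∈ S` with `K(r) ∪ α` consistent. -/
def Sres (α : EqSys) (S : DRS) : DRS :=
  (S.filter fun r => Consistent (Kr r ∪ α)).image (resRule α)

/-- Value chosen at a node labeled by an attribute `a ∉ A(S_α)` when building `Γ_α`:
the `α`-value of `a` if `a` occurs in `α`, and the minimum number of `V_S(a)` otherwise. -/
def chooseVal (α : EqSys) (S : DRS) (a : Attr) : Val :=
  if h : ∃ v, (a, v) ∈ α then Classical.choose h else some (sInf {n : ℕ | n ∈ VS S a})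

/-- The decision tree `Γ_α`. -/
def resTree (α : EqSys) (S : DRS) : DTree → DTree
  | .leaf Z => .leaf (Sres α Z)
  | .node a c =>
      if a ∈ AS (Sres α S) then .node a fun v => resTree α S (c v)
      else resTree α S (c (chooseVal α S a))

/-- The o-decision tree `o(Γ)`: remove all nodes reachable only via an edge labeled `*`. -/
def oTree : DTree → DTree
  | .leaf Z => .leaf Z
  | .node a c => .node a fun v => match v with
      | none => .leaf ∅
      | some x => oTree (c (some x))

/-!
Querying every attribute of `S` solves each of the problems, so every `h_C(S)` is at most
`n(S)`. For the matching lower bound take the system with the long rule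
`a₀ = 0 ∧ … ∧ a_{d-1} = 0 → 0`, the unit rules `aᵢ = 0 → i` for `d ≤ i < n` and the rules
`a₀ = m → n + m` for `1 ≤ m < k`; it is SR-reduced, has parameters `(n, d, k)` and pairwise
distinct decisions. An adversary answering `0` to every query keeps the long rule and all unit
rules realisable, so a tree for AR (or AD, the decisions being distinct) must query all `n`
attributes. For ESR the adversary answers `*` on the attributes `≥ d` and on the last attribute
`< d` to be queried, `0` otherwise: no rule is ever realised, and refuting all of them again
needs all `n` attributes.
-/

lemma consistent_iff {K : EqSys} :
    Consistent K ↔ ∀ a v w, (a, v) ∈ K → (a, w) ∈ K → v = w := by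
  constructor
  · intro h a v w hv hw
    exact h _ hv _ hw rfl
  · rintro h ⟨a, v⟩ hv ⟨b, w⟩ hw (rfl : a = b)
    exact h a v w hv hw

lemma consistent_insert {K : EqSys} {a : Attr} {v : Val} (hK : Consistent K)
    (ha : ∀ w, (a, w) ∉ K) : Consistent (insert (a, v) K) := by
  rw [consistent_iff] at hK ⊢
  intro b x y hx hy
  simp only [Finset.mem_insert, Prod.mk.injEq] at hx hy
  grind

lemma exists_conflict_of_not_consistent_union {A K : EqSys} (hA : Consistent A)
    (hK : Consistent K) (h : ¬ Consistent (A ∪ K)) :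
    ∃ a v w, (a, v) ∈ A ∧ (a, w) ∈ K ∧ v ≠ w := by
  by_contra! hno
  rw [consistent_iff] at hA hK h
  refine h fun a v w hv hw => ?_
  simp only [Finset.mem_union] at hv hw
  rcases hv with hv | hv <;> rcases hw with hw | hw
  · exact hA a v w hv hw
  · exact hno a v w hv hw
  · exact (hno a w v hw hv).symm
  · exact hK a v w hv hw

lemma mem_image_fst {K : EqSys} {a : Attr} : a ∈ K.image Prod.fst ↔ ∃ v, (a, v) ∈ K := by
  simp

lemma mem_Kr {r : Rule} {a : Attr} {v : Val} :
    (a, v) ∈ Kr r ↔ ∃ x, (a, x) ∈ r.1 ∧ v = some x := by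
  simp [Kr, eq_comm]

lemma WFRule.consistent_Kr {r : Rule} (h : WFRule r) : Consistent (Kr r) := by
  rw [consistent_iff]
  intro a v w hv hw
  obtain ⟨x, hx, rfl⟩ := mem_Kr.1 hv
  obtain ⟨y, hy, rfl⟩ := mem_Kr.1 hw
  exact congrArg some (h _ hx _ hy rfl)

lemma mem_AS {S : DRS} {a : Attr} : a ∈ AS S ↔ ∃ r ∈ S, ∃ x, (a, x) ∈ r.1 := by
  simp [AS, Ar]

lemma mem_VS {S : DRS} {a : Attr} {x : ℕ} : x ∈ VS S a ↔ ∃ r ∈ S, (a, x) ∈ r.1 := by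
  simp [VS]

lemma some_mem_Bo {S : DRS} {a : Attr} {x : ℕ} (h : x ∈ VS S a) : some x ∈ Bo S a :=
  Finset.mem_image_of_mem _ h

lemma Bo_subset_Be {S : DRS} {a : Attr} : Bo S a ⊆ Be S a := Finset.subset_insert _ _

lemma Bo_nonempty {S : DRS} {a : Attr} (h : a ∈ AS S) : (Bo S a).Nonempty := by
  obtain ⟨r, hr, x, hx⟩ := mem_AS.1 h
  exact ⟨_, some_mem_Bo (mem_VS.2 ⟨r, hr, hx⟩)⟩

lemma Be_nonempty {S : DRS} {a : Attr} : (Be S a).Nonempty := Finset.insert_nonempty _ _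

lemma SRred.ADred {S : DRS} (h : SRred S) : ADred S :=
  fun r hr ⟨r', hr', hsub, _⟩ => h r hr ⟨r', hr', hsub⟩

lemma not_consistent_Kr_union {S : DRS} {K : EqSys} {r : Rule} (hr : r ∈ S)
    (hK : AS S ⊆ K.image Prod.fst) (hrK : ¬ Kr r ⊆ K) : ¬ Consistent (Kr r ∪ K) := by
  intro hcons
  obtain ⟨⟨a, v⟩, hv, hvK⟩ := Finset.not_subset.1 hrK
  obtain ⟨x, hx, rfl⟩ := mem_Kr.1 hv
  obtain ⟨w, hw⟩ := mem_image_fst.1 (hK (mem_AS.2 ⟨r, hr, x, hx⟩))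
  rw [consistent_iff] at hcons
  rw [hcons a _ w (Finset.mem_union_left _ hv) (Finset.mem_union_right _ hw)] at hvK
  exact hvK hw

lemma condAR_filter {S : DRS} {K : EqSys} (hK : AS S ⊆ K.image Prod.fst) :
    CondAR S K (S.filter fun r => Kr r ⊆ K) :=
  ⟨fun _ hr => (Finset.mem_filter.1 hr).2,
    fun _ hr hrZ => not_consistent_Kr_union hr hK fun h => hrZ (Finset.mem_filter.2 ⟨hr, h⟩)⟩

lemma CondAR.condAD {S Z : DRS} {K : EqSys} (h : CondAR S K Z) : CondAD S K Z :=
  ⟨h.1, fun r hr hrd => h.2 r hr fun hrZ => hrd (Finset.mem_image_of_mem _ hrZ)⟩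

lemma CondAR.condSR {S Z : DRS} {K : EqSys} (h : CondAR S K Z) : CondSR S K Z :=
  ⟨h.1, fun hZ r hr => h.2 r hr (by simp [hZ])⟩

/-- Queries the attributes of `l` in turn; `K` accumulates the equations along the path. -/
def queryTree (S : DRS) : List Attr → EqSys → DTree
  | [], K => .leaf (S.filter fun r => Kr r ⊆ K)
  | a :: l, K => .node a fun v => queryTree S l (insert (a, v) K)

lemma depthT_queryTree {B : Attr → Finset Val} (S : DRS) (l : List Attr)
    (hB : ∀ a ∈ l, (B a).Nonempty) (K : EqSys) : depthT B (queryTree S l K) = l.length := by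
  induction l generalizing K with
  | nil => rfl
  | cons a l ih =>
    have hl : ∀ b ∈ l, (B b).Nonempty := fun b hb => hB b (List.mem_cons_of_mem a hb)
    simp only [queryTree, depthT, ih hl, List.length_cons,
      Finset.sup_const (hB a List.mem_cons_self)]

lemma treeOver_queryTree {B : Attr → Finset Val} {S : DRS} (l : List Attr)
    (hl : ∀ a ∈ l, a ∈ AS S) (K : EqSys) : TreeOver B S (queryTree S l K) := by
  induction l generalizing K with
  | nil => exact Finset.filter_subset _ _
  | cons a l ih =>
    exact ⟨hl a List.mem_cons_self,
      fun v _ => ih (fun b hb => hl b (List.mem_cons_of_mem a hb)) _⟩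

lemma PathT.queryTree {B : Attr → Finset Val} {S : DRS} {l : List Attr} {K₀ K : EqSys}
    {Z : DRS} (h : PathT B (queryTree S l K₀) K Z) :
    Z = S.filter (fun r => Kr r ⊆ K ∪ K₀) ∧ ∀ a ∈ l, a ∈ K.image Prod.fst := by
  induction l generalizing K₀ K with
  | nil =>
    cases h
    simp
  | cons a l ih =>
    cases h with
    | node _ _ v K _ _ hp =>
      obtain ⟨hZ, hl⟩ := ih hp
      refine ⟨by rw [hZ, Finset.insert_union, Finset.union_insert], ?_⟩
      intro b hb
      rw [Finset.image_insert, Finset.mem_insert]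
      exact (List.mem_cons.1 hb).imp id (hl b)

lemma exists_tree_depth_nS {cond : EqSys → DRS → Prop} {B : Attr → Finset Val} {S : DRS}
    (hcond : ∀ K, AS S ⊆ K.image Prod.fst → cond K (S.filter fun r => Kr r ⊆ K))
    (hB : ∀ a ∈ AS S, (B a).Nonempty) :
    ∃ Γ, TreeOver B S Γ ∧ Solves cond B Γ ∧ depthT B Γ = nS S := by
  refine ⟨queryTree S (AS S).toList ∅, treeOver_queryTree _ (fun a => Finset.mem_toList.1) ∅,
    fun K Z hp _ => ?_, ?_⟩
  · obtain ⟨rfl, hK⟩ := hp.queryTree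
    rw [Finset.union_empty]
    exact hcond K fun a ha => hK a (Finset.mem_toList.2 ha)
  · rw [depthT_queryTree _ _ (fun a ha => hB a (Finset.mem_toList.1 ha)), Finset.length_toList]
    rfl

lemma hgen_le_nS {cond : DRS → EqSys → DRS → Prop} {B : DRS → Attr → Finset Val} {S : DRS}
    (hcond : ∀ K, AS S ⊆ K.image Prod.fst → cond S K (S.filter fun r => Kr r ⊆ K))
    (hB : ∀ a ∈ AS S, (B S a).Nonempty) : hgen cond B S ≤ nS S :=
  Nat.sInf_le (exists_tree_depth_nS hcond hB)

lemma hAR_le_nS (S : DRS) : hAR S ≤ nS S :=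
  hgen_le_nS (fun _ hK => condAR_filter hK) fun _ => Bo_nonempty

lemma hEAR_le_nS (S : DRS) : hEAR S ≤ nS S :=
  hgen_le_nS (fun _ hK => condAR_filter hK) fun _ _ => Be_nonempty

lemma hAD_le_nS (S : DRS) : hAD S ≤ nS S :=
  hgen_le_nS (fun _ hK => (condAR_filter hK).condAD) fun _ => Bo_nonempty

lemma hEAD_le_nS (S : DRS) : hEAD S ≤ nS S :=
  hgen_le_nS (fun _ hK => (condAR_filter hK).condAD) fun _ _ => Be_nonempty

lemma hESR_le_nS (S : DRS) : hESR S ≤ nS S :=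
  hgen_le_nS (fun _ hK => (condAR_filter hK).condSR) fun _ _ => Be_nonempty

section Adversary

variable {B : Attr → Finset Val} {S : DRS}

lemma exists_path_of_adversary (Good : EqSys → Prop)
    (hstep : ∀ a ∈ AS S, ∀ K, Good K → ∃ v ∈ B a, Good (insert (a, v) K))
    {Γ : DTree} (hΓ : TreeOver B S Γ) {K₀ : EqSys} (hK₀ : Good K₀) :
    ∃ K Z, PathT B Γ K Z ∧ Z ⊆ S ∧ Good (K ∪ K₀) := by
  induction Γ generalizing K₀ with
  | leaf Z => exact ⟨∅, Z, .leaf Z, hΓ, by simpa using hK₀⟩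
  | node a c ih =>
    obtain ⟨v, hv, hgood⟩ := hstep a hΓ.1 K₀ hK₀
    obtain ⟨K, Z, hp, hZ, hK⟩ := ih v (hΓ.2 v hv) hgood
    refine ⟨insert (a, v) K, Z, .node a c v K Z hv hp, hZ, ?_⟩
    rwa [Finset.insert_union, ← Finset.union_insert]

lemma PathT.card_le_depthT {Γ : DTree} {K : EqSys} {Z : DRS} (h : PathT B Γ K Z) :
    K.card ≤ depthT B Γ := by
  induction h with
  | leaf => simp
  | node a c v K Z hv _ ih =>
    calc (insert (a, v) K).card ≤ K.card + 1 := Finset.card_insert_le _ _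
      _ ≤ depthT B (c v) + 1 := by omega
      _ ≤ depthT B (.node a c) :=
        Nat.succ_le_succ (Finset.le_sup (f := fun v => depthT B (c v)) hv)

lemma nS_le_card {K : EqSys} (hK : AS S ⊆ K.image Prod.fst) : nS S ≤ K.card :=
  (Finset.card_le_card hK).trans Finset.card_image_le

lemma nS_le_depthT_of_adversary {cond : EqSys → DRS → Prop} (Good : EqSys → Prop)
    (h₀ : Good ∅) (hstep : ∀ a ∈ AS S, ∀ K, Good K → ∃ v ∈ B a, Good (insert (a, v) K))
    (hcons : ∀ K, Good K → Consistent K)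
    (hcover : ∀ K Z, Good K → Z ⊆ S → cond K Z → AS S ⊆ K.image Prod.fst)
    {Γ : DTree} (hΓ : TreeOver B S Γ) (hsol : Solves cond B Γ) : nS S ≤ depthT B Γ := by
  obtain ⟨K, Z, hp, hZ, hK⟩ := exists_path_of_adversary Good hstep hΓ h₀
  rw [Finset.union_empty] at hK
  exact (nS_le_card (hcover K Z hK hZ (hsol K Z hp (hcons K hK)))).trans hp.card_le_depthT

lemma hgen_eq_nS_of_adversary {S : DRS} {cond : DRS → EqSys → DRS → Prop}
    {B : DRS → Attr → Finset Val}
    (hcond : ∀ K, AS S ⊆ K.image Prod.fst → cond S K (S.filter fun r => Kr r ⊆ K))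
    (hB : ∀ a ∈ AS S, (B S a).Nonempty) (Good : EqSys → Prop) (h₀ : Good ∅)
    (hstep : ∀ a ∈ AS S, ∀ K, Good K → ∃ v ∈ B S a, Good (insert (a, v) K))
    (hcons : ∀ K, Good K → Consistent K)
    (hcover : ∀ K Z, Good K → Z ⊆ S → cond S K Z → AS S ⊆ K.image Prod.fst) :
    hgen cond B S = nS S :=
  (hgen_le_nS hcond hB).antisymm <| le_csInf ⟨_, exists_tree_depth_nS hcond hB⟩ <| by
    rintro m ⟨Γ, hΓ, hsol, rfl⟩
    exact nS_le_depthT_of_adversary Good h₀ hstep hcons hcover hΓ hsol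

section ExtremalSystem

variable {n d k : ℕ}

def longRule (d : ℕ) : Rule := ((Finset.range d).image fun j => (j, 0), 0)
def unitRule (i : ℕ) : Rule := ({(i, 0)}, i)
def valueRule (n m : ℕ) : Rule := ({(0, m)}, n + m)

def extremalSys (n d k : ℕ) : DRS :=
  insert (longRule d) ((Finset.Ico d n).image unitRule ∪ (Finset.Ico 1 k).image (valueRule n))

lemma mem_extremalSys {r : Rule} :
    r ∈ extremalSys n d k ↔ r = longRule d ∨ (∃ i, d ≤ i ∧ i < n ∧ r = unitRule i) ∨
      ∃ m, 1 ≤ m ∧ m < k ∧ r = valueRule n m := by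
  simp only [extremalSys, Finset.mem_insert, Finset.mem_union, Finset.mem_image, Finset.mem_Ico]
  grind

lemma longRule_mem : longRule d ∈ extremalSys n d k := Finset.mem_insert_self _ _

lemma unitRule_mem {i : ℕ} (h₁ : d ≤ i) (h₂ : i < n) : unitRule i ∈ extremalSys n d k :=
  mem_extremalSys.2 (Or.inr (Or.inl ⟨i, h₁, h₂, rfl⟩))

lemma mem_longRule {a x : ℕ} : (a, x) ∈ (longRule d).1 ↔ a < d ∧ x = 0 := by
  simp [longRule, eq_comm]

lemma mem_Kr_longRule {a : Attr} {v : Val} :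
    (a, v) ∈ Kr (longRule d) ↔ a < d ∧ v = some 0 := by
  simp [mem_Kr, mem_longRule]

lemma Kr_unitRule {i : ℕ} : Kr (unitRule i) = {(i, some 0)} := rfl

lemma mem_VS_extremalSys (hdn : d ≤ n) {a x : ℕ} :
    x ∈ VS (extremalSys n d k) a ↔ (a < n ∧ x = 0) ∨ (a = 0 ∧ 1 ≤ x ∧ x < k) := by
  simp only [mem_VS, mem_extremalSys]
  constructor
  · rintro ⟨r, rfl | ⟨i, h₁, h₂, rfl⟩ | ⟨m, h₁, h₂, rfl⟩, hr⟩
    · have := mem_longRule.1 hr; omega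
    · obtain ⟨rfl, rfl⟩ := Prod.mk.inj (Finset.mem_singleton.1 hr)
      omega
    · obtain ⟨rfl, rfl⟩ := Prod.mk.inj (Finset.mem_singleton.1 hr)
      omega
  · rintro (⟨ha, rfl⟩ | ⟨rfl, h₁, h₂⟩)
    · by_cases had : a < d
      · exact ⟨_, Or.inl rfl, mem_longRule.2 ⟨had, rfl⟩⟩
      · exact ⟨_, Or.inr (Or.inl ⟨a, not_lt.1 had, ha, rfl⟩), Finset.mem_singleton_self _⟩
    · exact ⟨_, Or.inr (Or.inr ⟨x, h₁, h₂, rfl⟩), Finset.mem_singleton_self _⟩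

lemma mem_AS_iff_VS_nonempty {S : DRS} {a : Attr} : a ∈ AS S ↔ (VS S a).Nonempty := by
  simp only [mem_AS, Finset.Nonempty, mem_VS]
  grind

lemma AS_extremalSys (hn : 0 < n) (hdn : d ≤ n) :
    AS (extremalSys n d k) = Finset.range n := by
  ext a
  simp only [mem_AS_iff_VS_nonempty, Finset.Nonempty, mem_VS_extremalSys hdn, Finset.mem_range]
  constructor
  · rintro ⟨x, h | h⟩ <;> omega
  · exact fun ha => ⟨0, Or.inl ⟨ha, rfl⟩⟩

lemma VS_extremalSys_zero (hn : 0 < n) (hk : 0 < k) (hdn : d ≤ n) :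
    VS (extremalSys n d k) 0 = Finset.range k := by
  ext x
  rw [mem_VS_extremalSys hdn, Finset.mem_range]
  omega

lemma VS_extremalSys_of_pos (hdn : d ≤ n) {a : ℕ} (ha₀ : 0 < a) (ha : a < n) :
    VS (extremalSys n d k) a = {0} := by
  ext x
  rw [mem_VS_extremalSys hdn, Finset.mem_singleton]
  omega

lemma nS_extremalSys (hn : 0 < n) (hdn : d ≤ n) : nS (extremalSys n d k) = n := by
  rw [nS, AS_extremalSys hn hdn, Finset.card_range]

lemma kS_extremalSys (hn : 0 < n) (hk : 0 < k) (hdn : d ≤ n) :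
    kS (extremalSys n d k) = k := by
  rw [kS, AS_extremalSys hn hdn]
  refine le_antisymm (Finset.sup_le fun a ha => ?_) ?_
  · rcases Nat.eq_zero_or_pos a with rfl | ha₀
    · rw [VS_extremalSys_zero hn hk hdn, Finset.card_range]
    · rw [VS_extremalSys_of_pos hdn ha₀ (Finset.mem_range.1 ha), Finset.card_singleton]
      exact hk
  · calc k = (VS (extremalSys n d k) 0).card := by
          rw [VS_extremalSys_zero hn hk hdn, Finset.card_range]
      _ ≤ _ := Finset.le_sup (f := fun a => (VS (extremalSys n d k) a).card)
          (Finset.mem_range.2 hn)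

lemma ruleLen_longRule : ruleLen (longRule d) = d := by
  rw [ruleLen, longRule, Finset.card_image_of_injective _ fun a b h => congrArg Prod.fst h,
    Finset.card_range]

lemma dS_extremalSys (hd : 0 < d) : dS (extremalSys n d k) = d := by
  refine le_antisymm (Finset.sup_le fun r hr => ?_) ?_
  · rcases mem_extremalSys.1 hr with rfl | ⟨i, -, -, rfl⟩ | ⟨m, -, -, rfl⟩
    · exact ruleLen_longRule.le
    · exact hd
    · exact hd
  · exact ruleLen_longRule.symm.le.trans (Finset.le_sup longRule_mem)

lemma WFS_extremalSys : WFS (extremalSys n d k) := by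
  refine ⟨⟨_, longRule_mem⟩, fun r hr => ?_⟩
  rcases mem_extremalSys.1 hr with rfl | ⟨i, -, -, rfl⟩ | ⟨m, -, -, rfl⟩
  · intro p hp q hq _
    rw [(mem_longRule.1 hp).2, (mem_longRule.1 hq).2]
  all_goals
    intro p hp q hq _
    rw [Finset.mem_singleton.1 hp, Finset.mem_singleton.1 hq]

lemma SRred_extremalSys (hd : 0 < d) : SRred (extremalSys n d k) := by
  rintro r hr ⟨r', hr', hsub⟩
  have hne : r'.1 ≠ ∅ := by
    rcases mem_extremalSys.1 hr' with rfl | ⟨i, -, -, rfl⟩ | ⟨m, -, -, rfl⟩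
    · exact Finset.ne_empty_of_mem (mem_longRule.2 ⟨hd, rfl⟩)
    all_goals exact Finset.singleton_ne_empty _
  rcases mem_extremalSys.1 hr with rfl | ⟨i, -, -, rfl⟩ | ⟨m, -, -, rfl⟩
  · rcases mem_extremalSys.1 hr' with rfl | ⟨i, hi, -, rfl⟩ | ⟨m, hm, -, rfl⟩
    · exact hsub.ne rfl
    · have := mem_longRule.1 (hsub.subset (Finset.mem_singleton_self (i, 0))); omega
    · have := mem_longRule.1 (hsub.subset (Finset.mem_singleton_self (0, m))); omega
  all_goals exact hne (Finset.ssubset_singleton_iff.1 hsub)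

lemma injOn_snd_extremalSys (hd : 0 < d) :
    Set.InjOn Prod.snd (extremalSys n d k : Set Rule) := by
  intro r hr r' hr' h
  rcases mem_extremalSys.1 hr with rfl | ⟨i, hi, hin, rfl⟩ | ⟨m, hm, -, rfl⟩ <;>
  rcases mem_extremalSys.1 hr' with rfl | ⟨i', hi', hin', rfl⟩ | ⟨m', hm', -, rfl⟩ <;>
  simp only [longRule, unitRule, valueRule, Nat.add_left_cancel_iff] at h <;>
  first | rfl | (subst h; rfl) | omega

end ExtremalSystem

lemma CondAD.condAR {S Z : DRS} {K : EqSys} (hinj : Set.InjOn Prod.snd (S : Set Rule))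
    (hZ : Z ⊆ S) (h : CondAD S K Z) : CondAR S K Z := by
  refine ⟨h.1, fun r hr hrZ => h.2 r hr fun hd => hrZ ?_⟩
  obtain ⟨r', hr', hrr'⟩ := Finset.mem_image.1 hd
  rwa [← hinj (hZ hr') hr hrr']

section ZeroAdversary

variable {n d k : ℕ}

def ZeroAnswers (K : EqSys) : Prop := ∀ p ∈ K, p.2 = some 0

lemma ZeroAnswers.consistent {K : EqSys} (h : ZeroAnswers K) : Consistent K :=
  fun p hp q hq _ => (h p hp).trans (h q hq).symm

lemma ZeroAnswers.union {K L : EqSys} (hK : ZeroAnswers K) (hL : ZeroAnswers L) :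
    ZeroAnswers (K ∪ L) := by
  intro p hp
  rcases Finset.mem_union.1 hp with hp | hp
  exacts [hK p hp, hL p hp]

lemma zeroAnswers_insert {K : EqSys} {a : Attr} (h : ZeroAnswers K) :
    ZeroAnswers (insert (a, some 0) K) := by
  intro p hp
  rcases Finset.mem_insert.1 hp with rfl | hp
  exacts [rfl, h p hp]

lemma zeroAnswers_Kr_longRule : ZeroAnswers (Kr (longRule d)) :=
  fun _ hp => (mem_Kr_longRule.1 hp).2

lemma zeroAnswers_Kr_unitRule {i : ℕ} : ZeroAnswers (Kr (unitRule i)) := by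
  simp [ZeroAnswers, Kr_unitRule]

lemma zero_mem_VS_extremalSys (hdn : d ≤ n) {a : ℕ} (ha : a < n) :
    0 ∈ VS (extremalSys n d k) a :=
  (mem_VS_extremalSys hdn).2 (Or.inl ⟨ha, rfl⟩)

lemma ZeroAnswers.step {B : Attr → Finset Val} (hn : 0 < n) (hdn : d ≤ n)
    (hB : ∀ a, Bo (extremalSys n d k) a ⊆ B a) :
    ∀ a ∈ AS (extremalSys n d k), ∀ K, ZeroAnswers K →
      ∃ v ∈ B a, ZeroAnswers (insert (a, v) K) := by
  intro a ha K hK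
  rw [AS_extremalSys hn hdn, Finset.mem_range] at ha
  exact ⟨some 0, hB a (some_mem_Bo (zero_mem_VS_extremalSys hdn ha)), zeroAnswers_insert hK⟩

lemma ZeroAnswers.AS_subset_of_condAR (hn : 0 < n) (hdn : d ≤ n) {K : EqSys} {Z : DRS}
    (hK : ZeroAnswers K) (h : CondAR (extremalSys n d k) K Z) :
    AS (extremalSys n d k) ⊆ K.image Prod.fst := by
  have realised : ∀ r ∈ extremalSys n d k, ZeroAnswers (Kr r) → Kr r ⊆ K := fun r hr hr0 =>
    h.1 r (by_contra fun hrZ => h.2 r hr hrZ (hr0.union hK).consistent)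
  intro a ha
  rw [AS_extremalSys hn hdn, Finset.mem_range] at ha
  refine mem_image_fst.2 ⟨some 0, ?_⟩
  by_cases had : a < d
  · exact realised _ longRule_mem zeroAnswers_Kr_longRule (mem_Kr_longRule.2 ⟨had, rfl⟩)
  · exact realised _ (unitRule_mem (not_lt.1 had) ha) zeroAnswers_Kr_unitRule
      (Finset.mem_singleton_self _)

end ZeroAdversary

section StarAdversary

variable {n d k : ℕ}

/-- Answers `*` on attributes `≥ d`, and `0` on attributes `< d` except on the last of them to
be queried, which gets `*`. -/
def StarAnswers (d : ℕ) (K : EqSys) : Prop :=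
  Consistent K ∧ (∀ a v, (a, v) ∈ K → v = none ∨ (a < d ∧ v = some 0)) ∧
    (∀ a < d, (a, none) ∈ K → ∀ j < d, j ≠ a → (j, some 0) ∈ K) ∧
    ∃ j < d, (j, some 0) ∉ K

lemma starAnswers_empty (hd : 0 < d) : StarAnswers d ∅ := by
  simpa [StarAnswers, Consistent] using ⟨0, hd⟩

lemma StarAnswers.insert_none {K : EqSys} {a : Attr} (h : StarAnswers d K)
    (ha : ∀ w, (a, w) ∉ K) (hlast : a < d → ∀ j < d, j ≠ a → (j, some 0) ∈ K) :
    StarAnswers d (insert (a, none) K) := by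
  obtain ⟨hcons, hvals, hstar, j, hj, hjK⟩ := h
  refine ⟨consistent_insert hcons ha, ?_, ?_, j, hj, ?_⟩
  · simp only [Finset.mem_insert, Prod.mk.injEq]
    rintro b v (⟨-, rfl⟩ | hv)
    exacts [Or.inl rfl, hvals b v hv]
  · simp only [Finset.mem_insert, Prod.mk.injEq, and_true]
    rintro b hb (rfl | hb') i hi hib
    exacts [Or.inr (hlast hb i hi hib), Or.inr (hstar b hb hb' i hi hib)]
  · simpa using hjK

lemma StarAnswers.insert_zero {K : EqSys} {a : Attr} (h : StarAnswers d K)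
    (ha : ∀ w, (a, w) ∉ K) (had : a < d) {j : ℕ} (hj : j < d) (hja : j ≠ a)
    (hjK : (j, some 0) ∉ K) : StarAnswers d (insert (a, some 0) K) := by
  obtain ⟨hcons, hvals, hstar, -⟩ := h
  refine ⟨consistent_insert hcons ha, ?_, ?_, j, hj, ?_⟩
  · simp only [Finset.mem_insert, Prod.mk.injEq]
    rintro b v (⟨rfl, rfl⟩ | hv)
    exacts [Or.inr ⟨had, rfl⟩, hvals b v hv]
  · simp only [Finset.mem_insert, Prod.mk.injEq, reduceCtorEq, and_false, false_or]
    exact fun b hb hb' i hi hib => Or.inr (hstar b hb hb' i hi hib)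
  · simp [hja, hjK]

lemma StarAnswers.step (hn : 0 < n) (hdn : d ≤ n) :
    ∀ a ∈ AS (extremalSys n d k), ∀ K, StarAnswers d K →
      ∃ v ∈ Be (extremalSys n d k) a, StarAnswers d (insert (a, v) K) := by
  intro a ha K hK
  rw [AS_extremalSys hn hdn, Finset.mem_range] at ha
  have hzero : some 0 ∈ Be (extremalSys n d k) a :=
    Bo_subset_Be (some_mem_Bo (zero_mem_VS_extremalSys hdn ha))
  by_cases hfresh : ∀ w, (a, w) ∉ K
  · by_cases hlast : a < d → ∀ j < d, j ≠ a → (j, some 0) ∈ K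
    · exact ⟨none, Finset.mem_insert_self _ _, hK.insert_none hfresh hlast⟩
    · push Not at hlast
      obtain ⟨had, j, hj, hja, hjK⟩ := hlast
      exact ⟨some 0, hzero, hK.insert_zero hfresh had hj hja hjK⟩
  · push Not at hfresh
    obtain ⟨w, hw⟩ := hfresh
    refine ⟨w, ?_, by rwa [Finset.insert_eq_of_mem hw]⟩
    rcases hK.2.1 a w hw with rfl | ⟨-, rfl⟩
    exacts [Finset.mem_insert_self _ _, hzero]

lemma StarAnswers.not_Kr_subset {K : EqSys} (hK : StarAnswers d K) {r : Rule}
    (hr : r ∈ extremalSys n d k) : ¬ Kr r ⊆ K := by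
  obtain ⟨-, hvals, -, j, hj, hjK⟩ := hK
  intro hrK
  rcases mem_extremalSys.1 hr with rfl | ⟨i, hi, -, rfl⟩ | ⟨m, hm, -, rfl⟩
  · exact hjK (hrK (mem_Kr_longRule.2 ⟨hj, rfl⟩))
  · have := hvals i _ (hrK (Finset.mem_singleton_self _))
    simp only [reduceCtorEq, false_or, and_true] at this
    exact hi.not_gt this
  · have := hvals 0 _ (hrK (Finset.mem_singleton_self _))
    simp only [reduceCtorEq, false_or, Option.some.injEq] at this
    omega

lemma StarAnswers.AS_subset_of_condSR (hn : 0 < n) (hdn : d ≤ n) {K : EqSys} {Z : DRS}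
    (hK : StarAnswers d K) (hZ : Z ⊆ extremalSys n d k)
    (h : CondSR (extremalSys n d k) K Z) :
    AS (extremalSys n d k) ⊆ K.image Prod.fst := by
  have hZ₀ : Z = ∅ := Finset.eq_empty_of_forall_notMem fun r hr =>
    hK.not_Kr_subset (hZ hr) (h.1 r hr)
  obtain ⟨hcons, hvals, hstar, -⟩ := hK
  have conflict : ∀ r ∈ extremalSys n d k, ∃ a v w, (a, v) ∈ Kr r ∧ (a, w) ∈ K ∧ v ≠ w :=
    fun r hr => exists_conflict_of_not_consistent_union
      (WFS_extremalSys.2 r hr).consistent_Kr hcons (h.2 hZ₀ r hr)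
  intro a ha
  rw [AS_extremalSys hn hdn, Finset.mem_range] at ha
  by_cases had : a < d
  · obtain ⟨b, v, w, hv, hw, hvw⟩ := conflict _ longRule_mem
    obtain ⟨hb, rfl⟩ := mem_Kr_longRule.1 hv
    obtain rfl : w = none := (hvals b w hw).resolve_right fun h => hvw h.2.symm
    rcases eq_or_ne a b with rfl | hab
    · exact mem_image_fst.2 ⟨_, hw⟩
    · exact mem_image_fst.2 ⟨_, hstar b hb hw a had hab⟩
  · obtain ⟨b, v, w, hv, hw, -⟩ := conflict _ (unitRule_mem (not_lt.1 had) ha)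
    obtain ⟨rfl, -⟩ := Prod.mk.inj (Finset.mem_singleton.1 hv)
    exact mem_image_fst.2 ⟨_, hw⟩

end StarAdversary

section ExtremalDepths

variable {n d k : ℕ}

lemma hgen_extremalSys_of_condAR {cond : DRS → EqSys → DRS → Prop}
    {B : DRS → Attr → Finset Val} (hn : 0 < n) (hdn : d ≤ n)
    (hcond : ∀ S K, AS S ⊆ K.image Prod.fst → cond S K (S.filter fun r => Kr r ⊆ K))
    (hB : ∀ a, Bo (extremalSys n d k) a ⊆ B (extremalSys n d k) a)
    (hAR : ∀ K Z, Z ⊆ extremalSys n d k → cond (extremalSys n d k) K Z →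
      CondAR (extremalSys n d k) K Z) :
    hgen cond B (extremalSys n d k) = n :=
  (hgen_eq_nS_of_adversary (hcond _) (fun _ ha => (Bo_nonempty ha).mono (hB _)) ZeroAnswers
    (by simp [ZeroAnswers]) (ZeroAnswers.step hn hdn hB) (fun _ hK => hK.consistent)
    fun _ _ hK hZ h => hK.AS_subset_of_condAR hn hdn (hAR _ _ hZ h)).trans
    (nS_extremalSys hn hdn)

lemma hAR_extremalSys (hn : 0 < n) (hdn : d ≤ n) : hAR (extremalSys n d k) = n :=
  hgen_extremalSys_of_condAR hn hdn (fun _ _ => condAR_filter) (fun _ => subset_rfl)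
    fun _ _ _ h => h

lemma hEAR_extremalSys (hn : 0 < n) (hdn : d ≤ n) : hEAR (extremalSys n d k) = n :=
  hgen_extremalSys_of_condAR hn hdn (fun _ _ => condAR_filter) (fun _ => Bo_subset_Be)
    fun _ _ _ h => h

lemma hAD_extremalSys (hd : 0 < d) (hdn : d ≤ n) : hAD (extremalSys n d k) = n :=
  hgen_extremalSys_of_condAR (hd.trans_le hdn) hdn (fun _ _ hK => (condAR_filter hK).condAD)
    (fun _ => subset_rfl) fun _ _ hZ h => h.condAR (injOn_snd_extremalSys hd) hZ

lemma hEAD_extremalSys (hd : 0 < d) (hdn : d ≤ n) : hEAD (extremalSys n d k) = n :=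
  hgen_extremalSys_of_condAR (hd.trans_le hdn) hdn (fun _ _ hK => (condAR_filter hK).condAD)
    (fun _ => Bo_subset_Be) fun _ _ hZ h => h.condAR (injOn_snd_extremalSys hd) hZ

lemma hESR_extremalSys (hd : 0 < d) (hdn : d ≤ n) : hESR (extremalSys n d k) = n :=
  (hgen_eq_nS_of_adversary (fun _ hK => (condAR_filter hK).condSR) (fun _ _ => Be_nonempty)
    (StarAnswers d) (starAnswers_empty hd) (StarAnswers.step (hd.trans_le hdn) hdn)
    (fun _ hK => hK.1)
    fun _ _ hK hZ h => hK.AS_subset_of_condSR (hd.trans_le hdn) hdn hZ h).trans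
    (nS_extremalSys (hd.trans_le hdn) hdn)

end ExtremalDepths

lemma HmaxR_eq_of_le_nS {h : DRS → ℕ} {P : DRS → Prop} {n d k : ℕ} (hle : ∀ S, h S ≤ nS S)
    {S₀ : DRS} (hS₀ : WFS S₀ ∧ P S₀ ∧ nS S₀ = n ∧ dS S₀ = d ∧ kS S₀ = k ∧ h S₀ = n) :
    HmaxR h P n d k = n :=
  IsGreatest.csSup_eq ⟨⟨S₀, hS₀⟩, by rintro _ ⟨S, -, -, rfl, -, -, rfl⟩; exact hle S⟩

lemma Hmax_eq_of_le_nS {h : DRS → ℕ} {n d k : ℕ} (hle : ∀ S, h S ≤ nS S)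
    {S₀ : DRS} (hS₀ : WFS S₀ ∧ nS S₀ = n ∧ dS S₀ = d ∧ kS S₀ = k ∧ h S₀ = n) :
    Hmax h n d k = n :=
  IsGreatest.csSup_eq ⟨⟨S₀, hS₀⟩, by rintro _ ⟨S, -, rfl, -, -, rfl⟩; exact hle S⟩

theorem stmt10_general (n d k : ℕ) (hd : 0 < d) (hk : 0 < k) (hdn : d ≤ n) :
    HmaxR hESR SRred n d k = n ∧ HmaxR hAD ADred n d k = n ∧
    HmaxR hEAD ADred n d k = n ∧ Hmax hAD n d k = n ∧ Hmax hAR n d k = n ∧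
    Hmax hESR n d k = n ∧ Hmax hEAD n d k = n ∧ Hmax hEAR n d k = n := by
  have hn : 0 < n := hd.trans_le hdn
  have hW : WFS (extremalSys n d k) := WFS_extremalSys
  have hnS := nS_extremalSys (k := k) hn hdn
  have hdS := dS_extremalSys (n := n) (k := k) hd
  have hkS := kS_extremalSys (d := d) hn hk hdn
  have hSR := SRred_extremalSys (n := n) (k := k) hd
  have hAD := hSR.ADred
  exact ⟨HmaxR_eq_of_le_nS hESR_le_nS ⟨hW, hSR, hnS, hdS, hkS, hESR_extremalSys hd hdn⟩,
    HmaxR_eq_of_le_nS hAD_le_nS ⟨hW, hAD, hnS, hdS, hkS, hAD_extremalSys hd hdn⟩,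
    HmaxR_eq_of_le_nS hEAD_le_nS ⟨hW, hAD, hnS, hdS, hkS, hEAD_extremalSys hd hdn⟩,
    Hmax_eq_of_le_nS hAD_le_nS ⟨hW, hnS, hdS, hkS, hAD_extremalSys hd hdn⟩,
    Hmax_eq_of_le_nS hAR_le_nS ⟨hW, hnS, hdS, hkS, hAR_extremalSys hn hdn⟩,
    Hmax_eq_of_le_nS hESR_le_nS ⟨hW, hnS, hdS, hkS, hESR_extremalSys hd hdn⟩,
    Hmax_eq_of_le_nS hEAD_le_nS ⟨hW, hnS, hdS, hkS, hEAD_extremalSys hd hdn⟩,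
    Hmax_eq_of_le_nS hEAR_le_nS ⟨hW, hnS, hdS, hkS, hEAR_extremalSys hn hdn⟩⟩

/-- the eight upper-bound functions all equal `n`. -/
theorem stmt10 (n d k : ℕ) (hn : 0 < n) (hd : 0 < d) (hk : 0 < k) (hdn : d ≤ n) :
    HmaxR hESR SRred n d k = n ∧ HmaxR hAD ADred n d k = n ∧
    HmaxR hEAD ADred n d k = n ∧ Hmax hAD n d k = n ∧ Hmax hAR n d k = n ∧
    Hmax hESR n d k = n ∧ Hmax hEAD n d k = n ∧ Hmax hEAR n d k = n :=
  stmt10_general n d k hd hk hdn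
end Adversary
end
end

section
/- Let S be a decision rule system and S′ a nonempty subsystem of S. Then h_AR(S) ≥ h_AR(S′). -/
open scoped Classical
noncomputable section

/-!
Take a tree of minimum depth solving AR(S). Replace every node whose attribute does not occur in
`S'` by its subtree along one fixed value of that attribute, and intersect every terminal label
with `S'`; the depth does not grow. A path of the new tree is a path of the old one plus equations
on attributes outside `A(S')`, each carrying the fixed value of its attribute. Such equations
clash neither with each other nor with `K(r)` for `r ∈ S'`, so the old terminal label, cut down
to `S'`, answers AR(S').
-/

open Finset

lemma VS_nonempty_of_mem_AS {S : DRS} {a : Attr} (h : a ∈ AS S) : (VS S a).Nonempty := by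
  obtain ⟨r, hr, ha⟩ := mem_biUnion.1 h
  obtain ⟨p, hp, rfl⟩ := mem_image.1 ha
  exact ⟨p.2, mem_biUnion.2 ⟨r, hr, mem_image.2 ⟨p, mem_filter.2 ⟨hp, rfl⟩, rfl⟩⟩⟩

lemma VS_mono {S S' : DRS} (hsub : S' ⊆ S) (a : Attr) : VS S' a ⊆ VS S a :=
  biUnion_subset_biUnion_of_subset_left _ hsub

lemma Bo_mono {S S' : DRS} (hsub : S' ⊆ S) (a : Attr) : Bo S' a ⊆ Bo S a :=
  image_subset_image (VS_mono hsub a)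

lemma Ar_subset_AS {S : DRS} {r : Rule} (hr : r ∈ S) : Ar r ⊆ AS S :=
  subset_biUnion_of_mem Ar hr

lemma fst_mem_Ar_of_mem_Kr {r : Rule} {p : Attr × Val} (hp : p ∈ Kr r) : p.1 ∈ Ar r := by
  obtain ⟨q, hq, rfl⟩ := mem_image.1 hp
  exact mem_image_of_mem Prod.fst hq

def defaultVal (S : DRS) (a : Attr) : Val := some (sInf {n : ℕ | n ∈ VS S a})

lemma defaultVal_mem_Bo {S : DRS} {a : Attr} (h : a ∈ AS S) : defaultVal S a ∈ Bo S a :=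
  mem_image_of_mem some (Nat.sInf_mem (VS_nonempty_of_mem_AS h))

lemma Consistent.union_of_fst_not_mem {K E : EqSys} {A : Finset Attr} {f : Attr → Val}
    (hK : Consistent K) (hKA : ∀ p ∈ K, p.1 ∈ A) (hE : ∀ p ∈ E, p.1 ∉ A ∧ p.2 = f p.1) :
    Consistent (K ∪ E) := by
  intro p hp q hq hpq
  rcases mem_union.1 hp with hp | hp <;> rcases mem_union.1 hq with hq | hq
  · exact hK p hp q hq hpq
  · exact absurd (hpq ▸ hKA p hp) (hE q hq).1
  · exact absurd (hpq ▸ hKA q hq) (hE p hp).1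
  · rw [(hE p hp).2, (hE q hq).2, hpq]

namespace PathT

variable {B : Attr → Finset Val}

lemma leaf_inv {Z₀ Z : DRS} {K : EqSys} (h : PathT B (.leaf Z₀) K Z) : K = ∅ ∧ Z = Z₀ := by
  cases h; exact ⟨rfl, rfl⟩

lemma node_inv {a : Attr} {c : Val → DTree} {K : EqSys} {Z : DRS}
    (h : PathT B (.node a c) K Z) :
    ∃ v K₁, v ∈ B a ∧ PathT B (c v) K₁ Z ∧ K = insert (a, v) K₁ := by
  cases h with
  | node _ _ v K₁ _ hv hp => exact ⟨v, K₁, hv, hp, rfl⟩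

lemma fst_mem_AS {S : DRS} {Γ : DTree} {K : EqSys} {Z : DRS} (h : PathT B Γ K Z)
    (hΓ : TreeOver B S Γ) : ∀ p ∈ K, p.1 ∈ AS S := by
  induction h with
  | leaf Z => simp
  | node a c v K Z hv _ ih =>
      intro p hp
      obtain ⟨ha, hc⟩ := hΓ
      rcases mem_insert.1 hp with rfl | hp
      · exact ha
      · exact ih (hc v hv) p hp

end PathT

def restrictTree (S S' : DRS) : DTree → DTree
  | .leaf Z => .leaf (Z ∩ S')
  | .node a c =>
      if a ∈ AS S' then .node a fun v => restrictTree S S' (c v)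
      else restrictTree S S' (c (defaultVal S a))

section restrictTree

variable {S S' : DRS}

lemma TreeOver.restrictTree (hsub : S' ⊆ S) {Γ : DTree} (hΓ : TreeOver (Bo S) S Γ) :
    TreeOver (Bo S') S' (restrictTree S S' Γ) := by
  induction Γ with
  | leaf Z => exact inter_subset_right
  | node a c ih =>
      obtain ⟨ha, hc⟩ := hΓ
      by_cases h : a ∈ AS S'
      · rw [_root_.restrictTree, if_pos h]
        exact ⟨h, fun v hv => ih v (hc v (Bo_mono hsub a hv))⟩
      · rw [_root_.restrictTree, if_neg h]
        exact ih _ (hc _ (defaultVal_mem_Bo ha))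

lemma depthT_restrictTree_le (hsub : S' ⊆ S) {Γ : DTree} (hΓ : TreeOver (Bo S) S Γ) :
    depthT (Bo S') (restrictTree S S' Γ) ≤ depthT (Bo S) Γ := by
  induction Γ with
  | leaf Z => simp [restrictTree, depthT]
  | node a c ih =>
      obtain ⟨ha, hc⟩ := hΓ
      have hchild : ∀ v ∈ Bo S a, depthT (Bo S') (restrictTree S S' (c v)) ≤
          (Bo S a).sup fun v => depthT (Bo S) (c v) :=
        fun v hv => (ih v (hc v hv)).trans (le_sup (f := fun v => depthT (Bo S) (c v)) hv)
      by_cases h : a ∈ AS S'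
      · rw [restrictTree, if_pos h, depthT, depthT]
        exact Nat.succ_le_succ (Finset.sup_le fun v hv => hchild v (Bo_mono hsub a hv))
      · rw [restrictTree, if_neg h, depthT]
        exact (hchild _ (defaultVal_mem_Bo ha)).trans (Nat.le_succ _)

lemma PathT.exists_of_restrictTree (hsub : S' ⊆ S) {Γ : DTree} (hΓ : TreeOver (Bo S) S Γ)
    {K' : EqSys} {Z' : DRS} (hp : PathT (Bo S') (restrictTree S S' Γ) K' Z') :
    ∃ E Z, PathT (Bo S) Γ (K' ∪ E) Z ∧ Z' = Z ∩ S' ∧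
      ∀ p ∈ E, p.1 ∉ AS S' ∧ p.2 = defaultVal S p.1 := by
  induction Γ generalizing K' with
  | leaf Z₀ =>
      obtain ⟨rfl, rfl⟩ := hp.leaf_inv
      exact ⟨∅, Z₀, PathT.leaf Z₀, rfl, by simp⟩
  | node a c ih =>
      obtain ⟨ha, hc⟩ := hΓ
      by_cases h : a ∈ AS S'
      · rw [restrictTree, if_pos h] at hp
        obtain ⟨v, K, hv, hpath, rfl⟩ := hp.node_inv
        obtain ⟨E, Z, hP, hZ, hE⟩ := ih v (hc v (Bo_mono hsub a hv)) hpath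
        refine ⟨E, Z, ?_, hZ, hE⟩
        rw [insert_union]
        exact PathT.node a c v _ Z (Bo_mono hsub a hv) hP
      · rw [restrictTree, if_neg h] at hp
        obtain ⟨E, Z, hP, hZ, hE⟩ := ih _ (hc _ (defaultVal_mem_Bo ha)) hp
        refine ⟨insert (a, defaultVal S a) E, Z, ?_, hZ, ?_⟩
        · rw [union_insert]
          exact PathT.node a c _ _ Z (defaultVal_mem_Bo ha) hP
        · rintro p hp
          rcases mem_insert.1 hp with rfl | hp
          · exact ⟨h, rfl⟩
          · exact hE p hp

lemma Solves.restrictTree (hsub : S' ⊆ S) {Γ : DTree} (hΓ : TreeOver (Bo S) S Γ)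
    (hsol : Solves (CondAR S) (Bo S) Γ) :
    Solves (CondAR S') (Bo S') (restrictTree S S' Γ) := by
  intro K' Z' hp hcons
  obtain ⟨E, Z, hP, rfl, hE⟩ := hp.exists_of_restrictTree hsub hΓ
  have hK' : ∀ p ∈ K', p.1 ∈ AS S' := hp.fst_mem_AS (hΓ.restrictTree hsub)
  obtain ⟨hZK, hnotZ⟩ := hsol _ _ hP (hcons.union_of_fst_not_mem hK' hE)
  refine ⟨fun r hr p hpr => ?_, fun r hr hrZ hconsr => ?_⟩
  · obtain ⟨hrZ, hrS'⟩ := mem_inter.1 hr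
    refine (mem_union.1 (hZK r hrZ hpr)).resolve_right fun hpE => (hE p hpE).1 ?_
    exact Ar_subset_AS hrS' (fst_mem_Ar_of_mem_Kr hpr)
  · refine hnotZ r (hsub hr) (fun hrZ' => hrZ (mem_inter.2 ⟨hrZ', hr⟩)) ?_
    rw [← union_assoc]
    refine hconsr.union_of_fst_not_mem (fun p hp => ?_) hE
    rcases mem_union.1 hp with hp | hp
    · exact Ar_subset_AS hr (fst_mem_Ar_of_mem_Kr hp)
    · exact hK' p hp

end restrictTree

/-- `K` accumulates the equations of the path leading to the current node. -/
def fullTree (S : DRS) : List Attr → EqSys → DTree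
  | [], K => .leaf (S.filter fun r => Kr r ⊆ K)
  | a :: l, K => .node a fun v => fullTree S l (insert (a, v) K)

lemma treeOver_fullTree (S : DRS) {l : List Attr} (hl : ∀ a ∈ l, a ∈ AS S) (K : EqSys) :
    TreeOver (Bo S) S (fullTree S l K) := by
  induction l generalizing K with
  | nil => exact filter_subset _ _
  | cons a l ih =>
      exact ⟨hl a List.mem_cons_self,
        fun _ _ => ih (fun b hb => hl b (List.mem_cons_of_mem a hb)) _⟩

lemma PathT.of_fullTree {S : DRS} {l : List Attr} {K₀ K : EqSys} {Z : DRS}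
    (hp : PathT (Bo S) (fullTree S l K₀) K Z) :
    Z = S.filter (fun r => Kr r ⊆ K ∪ K₀) ∧ ∀ a ∈ l, ∃ y ∈ VS S a, (a, some y) ∈ K := by
  induction l generalizing K₀ K with
  | nil =>
      obtain ⟨rfl, rfl⟩ := hp.leaf_inv
      simp
  | cons a l ih =>
      obtain ⟨v, K₁, hv, hpath, rfl⟩ := hp.node_inv
      obtain ⟨hZ, hall⟩ := ih hpath
      obtain ⟨y, hy, rfl⟩ := mem_image.1 hv
      refine ⟨by rw [hZ, union_insert, insert_union], fun b hb => ?_⟩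
      rcases List.mem_cons.1 hb with rfl | hb
      · exact ⟨y, hy, mem_insert_self _ _⟩
      · obtain ⟨y', hy', hmem⟩ := hall b hb
        exact ⟨y', hy', mem_insert_of_mem hmem⟩

lemma solves_fullTree (S : DRS) : Solves (CondAR S) (Bo S) (fullTree S (AS S).toList ∅) := by
  intro K Z hp hcons
  obtain ⟨rfl, hall⟩ := hp.of_fullTree
  rw [union_empty]
  refine ⟨fun r hr => (mem_filter.1 hr).2, fun r hr hrZ hconsr => hrZ ?_⟩
  refine mem_filter.2 ⟨hr, fun p hp => ?_⟩
  obtain ⟨q, hq, rfl⟩ := mem_image.1 hp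
  have hqA : q.1 ∈ AS S := Ar_subset_AS hr (mem_image_of_mem Prod.fst hq)
  obtain ⟨y, -, hy⟩ := hall q.1 (mem_toList.2 hqA)
  have hqy : some q.2 = some y := hconsr _ (mem_union_left _ hp) _ (mem_union_right _ hy) rfl
  rwa [Option.some.inj hqy]

lemma exists_treeOver_solves_depthT_eq_hAR (S : DRS) :
    ∃ Γ, TreeOver (Bo S) S Γ ∧ Solves (CondAR S) (Bo S) Γ ∧ depthT (Bo S) Γ = hAR S := by
  exact Nat.sInf_mem
    (s := {m | ∃ Γ, TreeOver (Bo S) S Γ ∧ Solves (CondAR S) (Bo S) Γ ∧ depthT (Bo S) Γ = m})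
    ⟨_, _, treeOver_fullTree S (fun _ => mem_toList.1) ∅, solves_fullTree S, rfl⟩

lemma hAR_le_depthT {S : DRS} {Γ : DTree} (hΓ : TreeOver (Bo S) S Γ)
    (hsol : Solves (CondAR S) (Bo S) Γ) : hAR S ≤ depthT (Bo S) Γ :=
  Nat.sInf_le ⟨Γ, hΓ, hsol, rfl⟩

theorem stmt13_general (S S' : DRS) (hsub : S' ⊆ S) :
    hAR S' ≤ hAR S := by
  obtain ⟨Γ, hΓ, hsol, hdepth⟩ := exists_treeOver_solves_depthT_eq_hAR S
  calc hAR S' ≤ depthT (Bo S') (restrictTree S S' Γ) :=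
        hAR_le_depthT (hΓ.restrictTree hsub) (hsol.restrictTree hsub hΓ)
    _ ≤ depthT (Bo S) Γ := depthT_restrictTree_le hsub hΓ
    _ = hAR S := hdepth

/-- `h_AR(S) ≥ h_AR(S')` for a nonempty subsystem `S' ⊆ S`. -/
theorem stmt13 (S S' : DRS) (hS : WFS S) (hsub : S' ⊆ S) (hne : S'.Nonempty) :
    hAR S' ≤ hAR S :=
  stmt13_general S S' hsub
end
end

section
/- Let n,d,k be positive integers with d ≤ n, d ≥ 2, and k ≥ 2. Then h_EAR(n,d,k) ≤ d + n/k^{d−1}; i.e., there exists a decision rule system S with n(S)=n, d(S)=d, k(S)=k such that the extended All Rules problem EAR(S) is solvable by an e-decision tree of depth at most d + n/k^{d−1}. -/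
open scoped Classical
noncomputable section

/-!
For `j ≤ n - d` take the rule `codeRule d k j` whose attributes `0, …, d-2` carry the base-`k`
digits of `j` and whose last attribute `d-1+j` belongs to it alone; add `k` rules of length one
on attribute `0` so that this attribute takes `k` values. An e-tree first reads attributes
`0, …, d-2`. At most `(n-d)/k^(d-1) + 1` indices `j` agree with all these answers, since they
share their residue mod `k^(d-1)`; the tree then reads the private attribute of each of them.
Now every rule is either confirmed by the answers or refuted by one of them, so the leaf can
list the confirmed rules, at depth `(d-1) + (n-d)/k^(d-1) + 1`.
-/

lemma cast_sub_div_le_div (a b c : ℕ) : (((a - b) / c : ℕ) : ℝ) ≤ a / c :=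
  Nat.cast_div_le.trans (div_le_div_of_nonneg_right (by exact_mod_cast a.sub_le b) c.cast_nonneg)

namespace EAR

open Finset

lemma not_consistent_of_conflict {r : Rule} {K : EqSys} {p : Attr × ℕ} {v : Val}
    (hp : p ∈ r.1) (hv : (p.1, v) ∈ K) (hne : v ≠ some p.2) : ¬ Consistent (Kr r ∪ K) :=
  fun h => hne (h _ (mem_union_right _ hv) _ (mem_union_left _ (mem_image_of_mem _ hp)) rfl)

/-- With `g` recording the answers along a path with equation system `K`: either every
equation of `r` has been confirmed, or one of them has been refuted. -/
def Settled (K : EqSys) (g : Attr → Val) (r : Rule) : Prop :=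
  (∀ p ∈ r.1, (p.1, g p.1) ∈ K) ∨ ∃ p ∈ r.1, (p.1, g p.1) ∈ K ∧ g p.1 ≠ some p.2

def realizedRules (S : DRS) (g : Attr → Val) : DRS :=
  S.filter fun r => ∀ p ∈ r.1, g p.1 = some p.2

lemma condAR_realizedRules {S : DRS} {K : EqSys} {g : Attr → Val}
    (h : ∀ r ∈ S, Settled K g r) : CondAR S K (realizedRules S g) := by
  refine ⟨fun r hr => ?_, fun r hrS hr => ?_⟩
  · obtain ⟨hrS, hreal⟩ := mem_filter.1 hr
    rcases h r hrS with hall | ⟨p, hp, -, hne⟩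
    · intro q hq
      obtain ⟨p, hp, rfl⟩ := mem_image.1 hq
      simpa [hreal p hp] using hall p hp
    · exact absurd (hreal p hp) hne
  · have hnot : ∃ p ∈ r.1, g p.1 ≠ some p.2 := by
      simpa [realizedRules, hrS] using hr
    rcases h r hrS with hall | ⟨p, hp, hK, hne⟩
    · obtain ⟨p, hp, hne⟩ := hnot
      exact not_consistent_of_conflict hp (hall p hp) hne
    · exact not_consistent_of_conflict hp hK hne

def queryList (cont : (Attr → Val) → DTree) : List Attr → (Attr → Val) → DTree
  | [], f => cont f
  | a :: L, f => .node a fun v => queryList cont L (Function.update f a v)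

section queryList

variable {B : Attr → Finset Val} {cont : (Attr → Val) → DTree}

lemma depthT_queryList_le {m : ℕ} (hcont : ∀ f, depthT B (cont f) ≤ m) :
    ∀ (L : List Attr) (f : Attr → Val), depthT B (queryList cont L f) ≤ L.length + m
  | [], _ => by simpa [queryList] using hcont _
  | a :: L, f => by
    have hsup : ((B a).sup fun v => depthT B (queryList cont L (Function.update f a v))) ≤
        L.length + m :=
      Finset.sup_le fun v _ => depthT_queryList_le hcont L _
    simp only [queryList, depthT, List.length_cons]
    omega

lemma treeOver_queryList {S : DRS} (hcont : ∀ f, TreeOver B S (cont f)) :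
    ∀ (L : List Attr), (∀ a ∈ L, a ∈ AS S) → ∀ f, TreeOver B S (queryList cont L f)
  | [], _, f => hcont f
  | a :: L, hL, _ =>
    ⟨hL a List.mem_cons_self, fun _ _ =>
      treeOver_queryList hcont L (fun b hb => hL b (List.mem_cons_of_mem a hb)) _⟩

lemma exists_pathT_of_pathT_queryList :
    ∀ (L : List Attr) (f₀ : Attr → Val) (K : EqSys) (Z : DRS),
      PathT B (queryList cont L f₀) K Z →
      ∃ f Kc, (∀ a ∈ L, (a, f a) ∈ K) ∧ (∀ a ∉ L, f a = f₀ a) ∧ Kc ⊆ K ∧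
        PathT B (cont f) Kc Z
  | [], f₀, K, Z, h => ⟨f₀, K, by simp, fun _ _ => rfl, subset_rfl, h⟩
  | a :: L, f₀, _, Z, h => by
    cases h with
    | node _ _ v K Z _ hpath =>
      obtain ⟨f, Kc, hans, hrest, hKc, hc⟩ := exists_pathT_of_pathT_queryList L _ K Z hpath
      refine ⟨f, Kc, fun b hb => ?_, fun b hb => ?_, hKc.trans (subset_insert _ _), hc⟩
      · by_cases hbL : b ∈ L
        · exact mem_insert_of_mem (hans b hbL)
        · have hba : b = a := by simpa [hbL] using hb
          subst hba
          simp [hrest b hbL]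
      · rw [List.mem_cons, not_or] at hb
        rw [hrest b hb.2, Function.update_of_ne hb.1]

end queryList

/-- Decisions play no role in the All Rules problem, so they are all `0`. -/
def graphRule (A : Finset Attr) (val : Attr → ℕ) : Rule := (A.image fun a => (a, val a), 0)

section graphRule

variable {A : Finset Attr} {val : Attr → ℕ}

lemma mem_graphRule_fst {a : Attr} {x : ℕ} :
    (a, x) ∈ (graphRule A val).1 ↔ a ∈ A ∧ x = val a := by
  simp [graphRule, eq_comm]

lemma wfRule_graphRule : WFRule (graphRule A val) := by
  intro p hp q hq hpq
  rw [(mem_graphRule_fst.1 hp).2, (mem_graphRule_fst.1 hq).2, hpq]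

lemma ruleLen_graphRule : ruleLen (graphRule A val) = A.card :=
  card_image_of_injective _ fun _ _ h => congrArg Prod.fst h

lemma ar_graphRule : Ar (graphRule A val) = A := by
  ext a
  simp [Ar, graphRule]

end graphRule

lemma mem_VS {S : DRS} {a : Attr} {v : ℕ} : v ∈ VS S a ↔ ∃ r ∈ S, (a, v) ∈ r.1 := by
  simp only [VS, mem_biUnion, mem_image, mem_filter]
  constructor
  · rintro ⟨r, hr, ⟨_, _⟩, ⟨hp, rfl⟩, rfl⟩
    exact ⟨r, hr, hp⟩
  · rintro ⟨r, hr, hp⟩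
    exact ⟨r, hr, (a, v), ⟨hp, rfl⟩, rfl⟩

def digit (k i j : ℕ) : ℕ := j / k ^ i % k

lemma mod_pow_eq_of_digit_eq {k t j j' : ℕ} (h : ∀ i < t, digit k i j = digit k i j') :
    j % k ^ t = j' % k ^ t := by
  induction t with
  | zero => simp [Nat.mod_one]
  | succ t ih =>
    have ht : j / k ^ t % k = j' / k ^ t % k := h t (by omega)
    rw [Nat.mod_pow_succ, Nat.mod_pow_succ, ih fun i hi => h i (by omega), ht]

lemma card_le_div_add_one_of_mod_eq {s : Finset ℕ} {N m : ℕ} (hs : ∀ j ∈ s, j ≤ N)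
    (hmod : ∀ j ∈ s, ∀ j' ∈ s, j % m = j' % m) : s.card ≤ N / m + 1 := by
  calc s.card ≤ (range (N / m + 1)).card := by
        refine card_le_card_of_injOn (· / m) (fun j hj => ?_) fun j hj j' hj' hq => ?_
        · simpa [Nat.lt_succ_iff] using Nat.div_le_div_right (c := m) (hs j hj)
        · rw [← Nat.div_add_mod j m, ← Nat.div_add_mod j' m, show j / m = j' / m from hq,
            hmod j hj j' hj']
    _ = N / m + 1 := card_range _

def codeRule (d k j : ℕ) : Rule :=
  graphRule (insert (d - 1 + j) (range (d - 1))) fun a => if a < d - 1 then digit k a j else 0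

def valueRule (v : ℕ) : Rule := graphRule {0} fun _ => v

def earSystem (n d k : ℕ) : DRS :=
  (range (n - d + 1)).image (codeRule d k) ∪ (range k).image valueRule

section earSystem

variable {n d k : ℕ}

lemma mem_earSystem {r : Rule} :
    r ∈ earSystem n d k ↔ (∃ j < n - d + 1, codeRule d k j = r) ∨ ∃ v < k, valueRule v = r := by
  simp [earSystem]

lemma codeRule_mem_earSystem {j : ℕ} (hj : j < n - d + 1) : codeRule d k j ∈ earSystem n d k :=
  mem_earSystem.2 (.inl ⟨j, hj, rfl⟩)

lemma AS_earSystem (hd : 2 ≤ d) (hdn : d ≤ n) : AS (earSystem n d k) = range n := by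
  ext a
  simp only [AS, mem_biUnion, mem_earSystem, mem_range]
  constructor
  · rintro ⟨r, (⟨j, hj, rfl⟩ | ⟨v, -, rfl⟩), ha⟩
    · rw [codeRule, ar_graphRule, mem_insert, mem_range] at ha
      -- `omega` does not see through the abbreviation `Attr`
      simp only [Attr] at ha
      omega
    · rw [valueRule, ar_graphRule, mem_singleton] at ha
      simp only [Attr] at ha
      omega
  · intro ha
    refine ⟨codeRule d k (a - (d - 1)), .inl ⟨_, by omega, rfl⟩, ?_⟩
    rw [codeRule, ar_graphRule, mem_insert, mem_range]
    simp only [Attr]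
    omega

lemma nS_earSystem (hd : 2 ≤ d) (hdn : d ≤ n) : nS (earSystem n d k) = n := by
  rw [nS, AS_earSystem hd hdn, card_range]

lemma ruleLen_codeRule {j : ℕ} (hd : 1 ≤ d) : ruleLen (codeRule d k j) = d := by
  rw [codeRule, ruleLen_graphRule, card_insert_of_notMem (by simp), card_range]
  omega

lemma dS_earSystem (hd : 1 ≤ d) : dS (earSystem n d k) = d := by
  refine le_antisymm (Finset.sup_le fun r hr => ?_) ?_
  · rcases mem_earSystem.1 hr with ⟨j, -, rfl⟩ | ⟨v, -, rfl⟩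
    · exact (ruleLen_codeRule hd).le
    · rw [valueRule, ruleLen_graphRule, card_singleton]
      exact hd
  · calc d = ruleLen (codeRule d k 0) := (ruleLen_codeRule hd).symm
      _ ≤ dS (earSystem n d k) := le_sup (codeRule_mem_earSystem (by omega))

lemma VS_earSystem_subset (hk : 1 ≤ k) (a : Attr) : VS (earSystem n d k) a ⊆ range k := by
  intro x hx
  obtain ⟨r, hr, hax⟩ := mem_VS.1 hx
  rw [mem_range]
  rcases mem_earSystem.1 hr with ⟨j, -, rfl⟩ | ⟨v, hv, rfl⟩
  · obtain ⟨-, rfl⟩ := mem_graphRule_fst.1 hax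
    split_ifs
    · exact Nat.mod_lt _ hk
    · exact hk
  · obtain ⟨-, rfl⟩ := mem_graphRule_fst.1 hax
    exact hv

lemma kS_earSystem (hd : 2 ≤ d) (hdn : d ≤ n) (hk : 1 ≤ k) : kS (earSystem n d k) = k := by
  have hVS0 : VS (earSystem n d k) 0 = range k := by
    refine (VS_earSystem_subset hk 0).antisymm fun v hv => mem_VS.2 ?_
    exact ⟨valueRule v, mem_earSystem.2 (.inr ⟨v, mem_range.1 hv, rfl⟩),
      mem_graphRule_fst.2 ⟨mem_singleton_self 0, rfl⟩⟩
  refine le_antisymm (Finset.sup_le fun a _ => ?_) ?_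
  · simpa using card_le_card (VS_earSystem_subset hk a)
  · calc k = (VS (earSystem n d k) 0).card := by rw [hVS0, card_range]
      _ ≤ kS (earSystem n d k) :=
        le_sup (f := fun a => (VS (earSystem n d k) a).card)
          (by rw [AS_earSystem hd hdn, mem_range]; omega)

lemma wfs_earSystem : WFS (earSystem n d k) := by
  refine ⟨⟨_, codeRule_mem_earSystem (by omega : 0 < n - d + 1)⟩, fun r hr => ?_⟩
  rcases mem_earSystem.1 hr with ⟨j, -, rfl⟩ | ⟨v, -, rfl⟩
  · exact wfRule_graphRule
  · exact wfRule_graphRule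

end earSystem

def candidates (n d k : ℕ) (f : Attr → Val) : Finset ℕ :=
  (range (n - d + 1)).filter fun j => ∀ i < d - 1, f i = some (digit k i j)

lemma card_candidates_le (n d k : ℕ) (f : Attr → Val) :
    (candidates n d k f).card ≤ (n - d) / k ^ (d - 1) + 1 := by
  refine card_le_div_add_one_of_mod_eq (fun j hj => ?_) fun j hj j' hj' => ?_
  · exact Nat.lt_succ_iff.1 (mem_range.1 (mem_filter.1 hj).1)
  · refine mod_pow_eq_of_digit_eq fun i hi => ?_
    exact Option.some_inj.1 (((mem_filter.1 hj).2 i hi).symm.trans ((mem_filter.1 hj').2 i hi))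

def candidateTree (n d k : ℕ) (f : Attr → Val) : DTree :=
  queryList (fun g => .leaf (realizedRules (earSystem n d k) g))
    ((candidates n d k f).toList.map (d - 1 + ·)) f

def earTree (n d k : ℕ) : DTree := queryList (candidateTree n d k) (List.range (d - 1)) fun _ => none

section earTree

variable {n d k : ℕ}

lemma depthT_candidateTree_le (B : Attr → Finset Val) (f : Attr → Val) :
    depthT B (candidateTree n d k f) ≤ (n - d) / k ^ (d - 1) + 1 :=
  calc depthT B (candidateTree n d k f)
      ≤ ((candidates n d k f).toList.map (d - 1 + ·)).length + 0 :=
        depthT_queryList_le (cont := fun g => .leaf (realizedRules (earSystem n d k) g))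
          (fun _ => le_rfl) _ _
    _ ≤ (n - d) / k ^ (d - 1) + 1 := by simpa using card_candidates_le n d k f

lemma depthT_earTree_le (hd : 1 ≤ d) (B : Attr → Finset Val) :
    depthT B (earTree n d k) ≤ d + (n - d) / k ^ (d - 1) := by
  calc depthT B (earTree n d k) ≤ (List.range (d - 1)).length + ((n - d) / k ^ (d - 1) + 1) :=
        depthT_queryList_le (depthT_candidateTree_le B) _ _
    _ = d + (n - d) / k ^ (d - 1) := by rw [List.length_range]; omega

lemma treeOver_earTree (hd : 2 ≤ d) (hdn : d ≤ n) (B : Attr → Finset Val) :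
    TreeOver B (earSystem n d k) (earTree n d k) := by
  refine treeOver_queryList (fun f => treeOver_queryList (fun g => filter_subset _ _) _ ?_ f)
    _ ?_ _
  · intro a ha
    obtain ⟨j, hj, rfl⟩ := List.mem_map.1 ha
    have := mem_range.1 (mem_filter.1 (mem_toList.1 hj)).1
    rw [AS_earSystem hd hdn, mem_range]
    omega
  · intro a ha
    rw [AS_earSystem hd hdn, mem_range]
    rw [List.mem_range] at ha
    omega

lemma settled_earSystem (hd : 2 ≤ d) {f g : Attr → Val} {K : EqSys}
    (hf : ∀ i < d - 1, (i, f i) ∈ K) (hgf : ∀ i < d - 1, g i = f i)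
    (hg : ∀ j ∈ candidates n d k f, (d - 1 + j, g (d - 1 + j)) ∈ K) :
    ∀ r ∈ earSystem n d k, Settled K g r := by
  have hprefix : ∀ i < d - 1, (i, g i) ∈ K := fun i hi => hgf i hi ▸ hf i hi
  intro r hr
  rcases mem_earSystem.1 hr with ⟨j, hj, rfl⟩ | ⟨v, -, rfl⟩
  · by_cases hcand : j ∈ candidates n d k f
    · refine Or.inl fun p hp => ?_
      obtain ⟨ha, -⟩ := mem_graphRule_fst.1 hp
      rcases mem_insert.1 ha with ha | ha
      · exact ha ▸ hg j hcand
      · exact hprefix _ (mem_range.1 ha)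
    · refine Or.inr ?_
      obtain ⟨i, hi, hne⟩ : ∃ i < d - 1, f i ≠ some (digit k i j) := by
        simpa [candidates, hj] using hcand
      refine ⟨(i, digit k i j), mem_graphRule_fst.2 ⟨mem_insert_of_mem (mem_range.2 hi), ?_⟩,
        hprefix i hi, (hgf i hi).trans_ne hne⟩
      simp [hi]
  · refine Or.inl fun p hp => ?_
    rw [(mem_singleton.1 (mem_graphRule_fst.1 hp).1)]
    exact hprefix 0 (by omega)

lemma solves_earTree (hd : 2 ≤ d) (B : Attr → Finset Val) :
    Solves (CondAR (earSystem n d k)) B (earTree n d k) := by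
  intro K Z hpath _
  obtain ⟨f, Kc, hf, -, hKc, hpath⟩ := exists_pathT_of_pathT_queryList _ _ K Z hpath
  obtain ⟨g, Kl, hg, hgf, -, hleaf⟩ := exists_pathT_of_pathT_queryList _ _ Kc Z hpath
  cases hleaf
  refine condAR_realizedRules (settled_earSystem hd (fun i hi => hf i (List.mem_range.2 hi))
    (fun i hi => hgf i ?_) fun j hj => hKc (hg _ ?_))
  · simp only [List.mem_map, mem_toList, not_exists, not_and]
    intro j _ h
    simp only [Attr] at h
    omega
  · exact List.mem_map.2 ⟨j, mem_toList.2 hj, rfl⟩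

end earTree

lemma hEAR_earSystem_le {n d k : ℕ} (hd : 2 ≤ d) (hdn : d ≤ n) :
    hEAR (earSystem n d k) ≤ d + (n - d) / k ^ (d - 1) := by
  refine (Nat.sInf_le ?_).trans (depthT_earTree_le (by omega) (Be (earSystem n d k)))
  exact ⟨earTree n d k, treeOver_earTree hd hdn _, solves_earTree hd _, rfl⟩

end EAR

open EAR

/-- `h_EAR(n,d,k) ≤ d + n / k^(d-1)` for `d, k ≥ 2`, witnessed by a system. -/
theorem stmt15 (n d k : ℕ) (hdn : d ≤ n) (hd : 2 ≤ d) (hk : 2 ≤ k) :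
    (hmin hEAR n d k : ℝ) ≤ (d : ℝ) + (n : ℝ) / (k : ℝ) ^ (d - 1) ∧
    ∃ S : DRS, WFS S ∧ nS S = n ∧ dS S = d ∧ kS S = k ∧
      (hEAR S : ℝ) ≤ (d : ℝ) + (n : ℝ) / (k : ℝ) ^ (d - 1) := by
  have hW : WFS (earSystem n d k) := wfs_earSystem
  have hn : nS (earSystem n d k) = n := nS_earSystem hd hdn
  have hdS : dS (earSystem n d k) = d := dS_earSystem (by omega)
  have hkS : kS (earSystem n d k) = k := kS_earSystem hd hdn (by omega)
  have hreal : (hEAR (earSystem n d k) : ℝ) ≤ d + n / (k : ℝ) ^ (d - 1) := by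
    have hle : (hEAR (earSystem n d k) : ℝ) ≤ d + (((n - d) / k ^ (d - 1) : ℕ) : ℝ) := by
      exact_mod_cast hEAR_earSystem_le hd hdn
    have hdiv := cast_sub_div_le_div n d (k ^ (d - 1))
    push_cast at hdiv
    linarith
  refine ⟨(Nat.cast_le.2 (Nat.sInf_le ?_)).trans hreal, earSystem n d k, hW, hn, hdS, hkS, hreal⟩
  exact ⟨_, hW, hn, hdS, hkS, rfl⟩
end
end
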